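/- arXiv:2603.09751 — 5 statements merged into one kernel-verified Lean document; each statement's English description precedes it below -/
import Mathlib

section
/- The polynomial v(x) = (f0/(12λ⁴))·(6 + 6λx − 3(λx)² − (λx)³), with f0, λ > 0, has exactly one positive root x₀; moreover v(x)>0 for 0 ≤ x < x₀ and v(x)<0 for x > x₀. -/
/-! `v x` is a positive multiple of `p (λ x)` with `p t = 6 + 6t - 3t² - t³`. The cubic `p` is
positive on `[0, 1]`, strictly decreasing on `[1, ∞)` and changes sign on `[1, 2]`, so it has a
single sign change at some `t₀`, and `v` then changes sign exactly once, at `t₀ / λ`. -/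

open Set

def HasSingleSignChange (g : ℝ → ℝ) (t₀ : ℝ) : Prop :=
  0 < t₀ ∧ g t₀ = 0 ∧ (∀ t, 0 ≤ t → t < t₀ → 0 < g t) ∧ ∀ t, t₀ < t → g t < 0

namespace HasSingleSignChange

variable {g : ℝ → ℝ} {t₀ : ℝ}

theorem eq_of_pos_of_eq_zero (h : HasSingleSignChange g t₀) {t : ℝ} (ht : 0 < t)
    (hgt : g t = 0) : t = t₀ := by
  obtain ⟨-, -, hpos, hneg⟩ := h
  rcases lt_trichotomy t t₀ with hlt | heq | hgt'
  · exact absurd hgt (hpos t ht.le hlt).ne'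
  · exact heq
  · exact absurd hgt (hneg t hgt').ne

theorem comp_mul (h : HasSingleSignChange g t₀) {c lam : ℝ} (hc : 0 < c) (hlam : 0 < lam) :
    HasSingleSignChange (fun x => c * g (lam * x)) (t₀ / lam) := by
  obtain ⟨ht₀, hroot, hpos, hneg⟩ := h
  refine ⟨div_pos ht₀ hlam, ?_, fun x hx hxt => ?_, fun x hxt => ?_⟩
  · simp only [mul_div_cancel₀ t₀ hlam.ne', hroot, mul_zero]
  · rw [lt_div_iff₀ hlam, mul_comm] at hxt
    exact mul_pos hc (hpos _ (mul_nonneg hlam.le hx) hxt)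
  · rw [div_lt_iff₀ hlam, mul_comm] at hxt
    exact mul_neg_of_pos_of_neg hc (hneg _ hxt)

end HasSingleSignChange

def cubicProfile (t : ℝ) : ℝ := 6 + 6 * t - 3 * t ^ 2 - t ^ 3

theorem cubicProfile_pos_of_mem_Icc {t : ℝ} (ht : t ∈ Icc (0 : ℝ) 1) : 0 < cubicProfile t := by
  obtain ⟨h0, h1⟩ := ht
  unfold cubicProfile
  nlinarith

theorem strictAntiOn_cubicProfile : StrictAntiOn cubicProfile (Ici 1) := by
  intro a (ha : 1 ≤ a) b (hb : 1 ≤ b) hab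
  -- `p a - p b = (b - a) (3 (a + b) + a² + ab + b² - 6)`, and the second factor is `≥ 3` here
  have key : cubicProfile a - cubicProfile b =
      (b - a) * (3 * (a + b) + a ^ 2 + a * b + b ^ 2 - 6) := by
    unfold cubicProfile; ring
  have hfactor : 0 < 3 * (a + b) + a ^ 2 + a * b + b ^ 2 - 6 := by nlinarith
  nlinarith [mul_pos (sub_pos.2 hab) hfactor]

theorem exists_hasSingleSignChange_cubicProfile : ∃ t₀, HasSingleSignChange cubicProfile t₀ := by
  have hcont : ContinuousOn cubicProfile (Icc 1 2) := by unfold cubicProfile; fun_prop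
  have hzero : (0 : ℝ) ∈ Icc (cubicProfile 2) (cubicProfile 1) := by
    norm_num [cubicProfile]
  obtain ⟨t₀, ⟨ht₁, -⟩, hroot⟩ := intermediate_value_Icc' (by norm_num) hcont hzero
  refine ⟨t₀, by linarith, hroot, fun t ht0 htt₀ => ?_, fun t htt₀ => ?_⟩
  · rcases le_or_gt t 1 with ht1 | ht1
    · exact cubicProfile_pos_of_mem_Icc ⟨ht0, ht1⟩
    · exact hroot ▸ strictAntiOn_cubicProfile ht1.le ht₁ htt₀
  · exact hroot ▸ strictAntiOn_cubicProfile ht₁ (ht₁.trans htt₀.le) htt₀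

/-- The polynomial velocity v(x) = (f0/(12λ⁴))(6 + 6λx - 3(λx)² - (λx)³) (f0, λ > 0)
has exactly one positive root x₀, is positive on [0, x₀) and negative on (x₀, ∞). -/
theorem stmt_3 (f0 lam : ℝ) (hf0 : 0 < f0) (hlam : 0 < lam)
    (v : ℝ → ℝ)
    (hv : ∀ x, v x = f0 / (12 * lam ^ 4) *
      (6 + 6 * (lam * x) - 3 * (lam * x) ^ 2 - (lam * x) ^ 3)) :
    ∃ x₀ : ℝ, 0 < x₀ ∧ v x₀ = 0 ∧
      (∀ x : ℝ, 0 ≤ x → x < x₀ → 0 < v x) ∧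
      (∀ x : ℝ, x₀ < x → v x < 0) ∧
      (∀ x : ℝ, 0 < x → v x = 0 → x = x₀) := by
  obtain ⟨t₀, hcubic⟩ := exists_hasSingleSignChange_cubicProfile
  have hv' : v = fun x => f0 / (12 * lam ^ 4) * cubicProfile (lam * x) := funext hv
  have h : HasSingleSignChange v (t₀ / lam) :=
    hv' ▸ hcubic.comp_mul (by positivity) hlam
  exact ⟨t₀ / lam, h.1, h.2.1, h.2.2.1, h.2.2.2, fun x hx hvx => h.eq_of_pos_of_eq_zero hx hvx⟩
end

section
/- Let α > β+2 and define I₁(x) := x^{β−α} ∫₀^{x/2} ( (1−y/x)^β/(x^{-α}+(1−y/x)^α) − 1 )·y^β/(1+y^α) dy. Then x^{α−β+1}·I₁(x) → (α−β)·∫₀^∞ y^{β+1}/(1+y^α) dy as x → ∞. -/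
open MeasureTheory Real Set Filter Topology

/-!
Since `x ^ (α - β + 1) * x ^ (β - α) = x`, the quantity is `∫₀^{x/2} x (K_x(y) - 1) w(y) dy` with
`w(y) = y^β / (1 + y^α)` and `K_x(y) - 1` the deviation of the gain kernel. Pointwise,
`x (K_x(y) - 1) → (α - β) y`, the derivative at `t = 0` of `(1 - t)^β - (1 - t)^α`, since the
extra `x^(-α)` in the denominator only contributes `x^(1-α) → 0`. For `y ≤ x/2` and `x ≥ 1`,
Bernoulli's inequality and `(1 - y/x)^α ≥ 2^(-α)` give `|x (K_x(y) - 1)| ≤ 2^α (α y + 1)`, and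
`(α y + 1) w(y)` is integrable on `(0, ∞)` because `α > β + 2`. Dominated convergence concludes.
-/

theorem tendsto_intervalIntegral_Ioi_of_dominated {ι : Type*} {l : Filter ι}
    [l.IsCountablyGenerated] {F : ι → ℝ → ℝ} {f bound : ℝ → ℝ} {a : ℝ} {b : ι → ℝ}
    (hb : Tendsto b l atTop)
    (hF_meas : ∀ᶠ n in l, AEStronglyMeasurable (F n) (volume.restrict (Ioi a)))
    (h_bound : ∀ᶠ n in l, ∀ y ∈ Ioc a (b n), ‖F n y‖ ≤ bound y)
    (bound_integrable : IntegrableOn bound (Ioi a))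
    (h_lim : ∀ y ∈ Ioi a, Tendsto (fun n => F n y) l (𝓝 (f y))) :
    Tendsto (fun n => ∫ y in a..b n, F n y) l (𝓝 (∫ y in Ioi a, f y)) := by
  have h_eq : ∀ᶠ n in l,
      ∫ y in a..b n, F n y = ∫ y in Ioi a, (Ioc a (b n)).indicator (F n) y := by
    filter_upwards [hb.eventually_ge_atTop a] with n hn
    rw [intervalIntegral.integral_of_le hn, integral_indicator measurableSet_Ioc,
      Measure.restrict_restrict measurableSet_Ioc, inter_eq_self_of_subset_left Ioc_subset_Ioi_self]
  refine Tendsto.congr' (EventuallyEq.symm h_eq) ?_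
  refine tendsto_integral_filter_of_dominated_convergence (fun y => ‖bound y‖) ?_ ?_
    bound_integrable.norm ?_
  · filter_upwards [hF_meas] with n hn using hn.indicator measurableSet_Ioc
  · filter_upwards [h_bound] with n hn
    refine Eventually.of_forall fun y => ?_
    by_cases hy : y ∈ Ioc a (b n)
    · rw [indicator_of_mem hy]
      exact (hn y hy).trans (le_abs_self _)
    · rw [indicator_of_notMem hy, norm_zero]
      exact norm_nonneg _
  · filter_upwards [ae_restrict_mem measurableSet_Ioi] with y hy
    refine (h_lim y hy).congr' ?_
    filter_upwards [hb.eventually_ge_atTop y] with n hn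
    rw [indicator_of_mem (show y ∈ Ioc a (b n) from ⟨hy, hn⟩)]

theorem integrableOn_rpow_div_one_add_rpow {p q : ℝ} (hp : 0 ≤ p) (hpq : p + 1 < q) :
    IntegrableOn (fun y : ℝ => y ^ p / (1 + y ^ q)) (Ioi 0) := by
  have hmeas : AEStronglyMeasurable (fun y : ℝ => y ^ p / (1 + y ^ q)) :=
    (by fun_prop : Measurable fun y : ℝ => y ^ p / (1 + y ^ q)).aestronglyMeasurable
  rw [← Ioc_union_Ioi_eq_Ioi zero_le_one]
  refine IntegrableOn.union ?_ ?_
  · refine Measure.integrableOn_of_bounded (M := 1) (by simp) hmeas ?_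
    filter_upwards [ae_restrict_mem measurableSet_Ioc] with y ⟨hy0, hy1⟩
    rw [norm_of_nonneg (by positivity), div_le_one (by positivity)]
    linarith [rpow_le_one hy0.le hy1 hp, rpow_nonneg hy0.le q]
  · refine (integrableOn_Ioi_rpow_of_lt (by linarith : p - q < -1) one_pos).mono'
      hmeas.restrict ?_
    filter_upwards [ae_restrict_mem measurableSet_Ioi] with y (hy : 1 < y)
    have hy0 : 0 < y := one_pos.trans hy
    rw [norm_of_nonneg (by positivity), rpow_sub hy0]
    exact div_le_div_of_nonneg_left (by positivity) (by positivity) (by linarith)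

noncomputable def gainDeviation (α β x y : ℝ) : ℝ :=
  (1 - y / x) ^ β / (x ^ (-α) + (1 - y / x) ^ α) - 1

theorem hasDerivAt_one_sub_rpow_sub_one_sub_rpow (α β : ℝ) :
    HasDerivAt (fun t : ℝ => (1 - t) ^ β - (1 - t) ^ α) (α - β) 0 := by
  have hsub : HasDerivAt (fun t : ℝ => 1 - t) (-1) 0 := (hasDerivAt_id 0).const_sub 1
  have hpow (p : ℝ) : HasDerivAt (fun t : ℝ => (1 - t) ^ p) (-p) 0 := by
    simpa using hsub.rpow_const (p := p) (Or.inl (by norm_num))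
  have hdiff := (hpow β).sub (hpow α)
  rwa [neg_sub_neg] at hdiff

theorem tendsto_mul_one_sub_div_rpow_sub_one_sub_div_rpow (α β : ℝ) {y : ℝ} (hy : y ≠ 0) :
    Tendsto (fun x : ℝ => x * ((1 - y / x) ^ β - (1 - y / x) ^ α)) atTop
      (𝓝 ((α - β) * y)) := by
  have hslope : Tendsto (fun t : ℝ => ((1 - t) ^ β - (1 - t) ^ α) / t) (𝓝[≠] 0)
      (𝓝 (α - β)) := by
    refine (hasDerivAt_iff_tendsto_slope.mp
      (hasDerivAt_one_sub_rpow_sub_one_sub_rpow α β)).congr fun t => ?_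
    simp [slope_def_field]
  have hdiv : Tendsto (fun x : ℝ => y / x) atTop (𝓝[≠] 0) :=
    tendsto_nhdsWithin_of_tendsto_nhds_of_eventually_within (fun x : ℝ => y / x)
      ((tendsto_const_nhds (x := y)).div_atTop tendsto_id)
      (by filter_upwards [eventually_ne_atTop 0] with x hx using div_ne_zero hy hx)
  refine ((hslope.comp hdiv).mul_const y).congr' ?_
  filter_upwards [eventually_ne_atTop 0] with x hx
  simp only [Function.comp_apply]
  field_simp

theorem tendsto_mul_gainDeviation {α : ℝ} (β : ℝ) (hα : 1 < α) {y : ℝ} (hy : 0 < y) :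
    Tendsto (fun x : ℝ => x * gainDeviation α β x y) atTop (𝓝 ((α - β) * y)) := by
  have hden : Tendsto (fun x : ℝ => x ^ (-α) + (1 - y / x) ^ α) atTop (𝓝 1) := by
    have hbase : Tendsto (fun x : ℝ => 1 - y / x) atTop (𝓝 1) := by
      simpa using tendsto_const_nhds.sub ((tendsto_const_nhds (x := y)).div_atTop tendsto_id)
    simpa using (tendsto_rpow_neg_atTop (by linarith)).add
      (hbase.rpow_const (p := α) (Or.inl one_ne_zero))
  have hcorr : Tendsto (fun x : ℝ => x ^ (1 - α)) atTop (𝓝 0) := by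
    simpa using tendsto_rpow_neg_atTop (y := α - 1) (by linarith)
  have hlim := ((tendsto_mul_one_sub_div_rpow_sub_one_sub_div_rpow α β hy.ne').sub hcorr).div
    hden one_ne_zero
  rw [sub_zero, div_one] at hlim
  -- with t = y / x, x · gainDeviation = (x ((1-t)^β - (1-t)^α) - x^(1-α)) / (x^(-α) + (1-t)^α)
  refine hlim.congr' ?_
  filter_upwards [eventually_gt_atTop y] with x hx
  have hx0 : 0 < x := hy.trans hx
  have hbase : 0 < 1 - y / x := by rw [sub_pos, div_lt_one hx0]; exact hx
  have hden_pos : 0 < x ^ (-α) + (1 - y / x) ^ α := by positivity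
  rw [Pi.div_apply, gainDeviation, show 1 - α = 1 + -α by ring, rpow_add hx0, rpow_one]
  field_simp
  ring

theorem abs_one_sub_rpow_sub_add_one_sub_rpow_le {α β t c : ℝ} (hβ : 0 ≤ β) (hβα : β ≤ α)
    (hα : 1 ≤ α) (ht0 : 0 ≤ t) (ht1 : t ≤ 1) (hc : 0 ≤ c) :
    |(1 - t) ^ β - (c + (1 - t) ^ α)| ≤ α * t + c := by
  have hmono : (1 - t) ^ α ≤ (1 - t) ^ β :=
    rpow_le_rpow_of_exponent_ge' (by linarith) (by linarith) hβ hβα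
  have hle_one : (1 - t) ^ β ≤ 1 := rpow_le_one (by linarith) (by linarith) hβ
  have hbernoulli : 1 - α * t ≤ (1 - t) ^ α := by
    have := one_add_mul_self_le_rpow_one_add (s := -t) (by linarith) hα
    rw [← sub_eq_add_neg] at this
    linarith
  rw [abs_le]
  constructor <;> nlinarith

theorem mul_abs_gainDeviation_le {α β x y : ℝ} (hβ : 0 ≤ β) (hβα : β ≤ α) (hα : 1 ≤ α)
    (hx : 1 ≤ x) (hy0 : 0 ≤ y) (hy : y ≤ x / 2) :
    x * |gainDeviation α β x y| ≤ 2 ^ α * (α * y + 1) := by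
  have hx0 : 0 < x := one_pos.trans_le hx
  have hyx : y / x ≤ 1 / 2 := by rw [div_le_iff₀ hx0]; linarith
  have hbase : 1 / 2 ≤ 1 - y / x := by linarith
  have hden : 2 ^ (-α) ≤ x ^ (-α) + (1 - y / x) ^ α := by
    have : (1 / 2 : ℝ) ^ α ≤ (1 - y / x) ^ α := rpow_le_rpow (by norm_num) hbase (by linarith)
    rw [one_div, inv_rpow zero_le_two, ← rpow_neg zero_le_two] at this
    linarith [rpow_pos_of_pos hx0 (-α)]
  have hnum := abs_one_sub_rpow_sub_add_one_sub_rpow_le (t := y / x) hβ hβα hα (by positivity)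
    (by linarith) (rpow_pos_of_pos hx0 (-α)).le
  have hcorr : x * x ^ (-α) ≤ 1 := by
    calc x * x ^ (-α) = x ^ (1 + -α) := by rw [rpow_add hx0, rpow_one]
      _ ≤ 1 := rpow_le_one_of_one_le_of_nonpos hx (by linarith)
  have hden_pos : 0 < x ^ (-α) + (1 - y / x) ^ α := (rpow_pos_of_pos two_pos _).trans_le hden
  calc x * |gainDeviation α β x y|
      = x * (|(1 - y / x) ^ β - (x ^ (-α) + (1 - y / x) ^ α)| /
          (x ^ (-α) + (1 - y / x) ^ α)) := by
        rw [gainDeviation, div_sub_one hden_pos.ne', abs_div, abs_of_pos hden_pos]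
    _ ≤ x * ((α * (y / x) + x ^ (-α)) / 2 ^ (-α)) := by
        gcongr
    _ = 2 ^ α * (α * y + x * x ^ (-α)) := by
        rw [rpow_neg zero_le_two]
        field_simp
    _ ≤ 2 ^ α * (α * y + 1) := by gcongr

/-- For α > β + 2, β ≥ 0, the deviation term
I₁(x) = x^{β-α} ∫₀^{x/2} ((1-y/x)^β/(x^{-α}+(1-y/x)^α) - 1) y^β/(1+y^α) dy
satisfies x^{α-β+1} I₁(x) → (α-β) ∫₀^∞ y^{β+1}/(1+y^α) dy as x → ∞. -/
theorem stmt_9 (α β : ℝ) (hβ : 0 ≤ β) (hα : β + 2 < α) :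
    Tendsto (fun x : ℝ =>
        x ^ (α - β + 1) *
          (x ^ (β - α) * ∫ y in (0:ℝ)..(x / 2),
            ((1 - y / x) ^ β / (x ^ (-α) + (1 - y / x) ^ α) - 1) *
              (y ^ β / (1 + y ^ α))))
      atTop (nhds ((α - β) * ∫ y in Ioi (0:ℝ), y ^ (β + 1) / (1 + y ^ α))) := by
  have hw : ∀ y > (0 : ℝ), y * (y ^ β / (1 + y ^ α)) = y ^ (β + 1) / (1 + y ^ α) := by
    intro y hy
    rw [rpow_add_one hy.ne', mul_div_assoc']
    ring
  have hrewrite : ∀ᶠ x in atTop,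
      ∫ y in (0:ℝ)..(x / 2), x * gainDeviation α β x y * (y ^ β / (1 + y ^ α)) =
        x ^ (α - β + 1) * (x ^ (β - α) * ∫ y in (0:ℝ)..(x / 2),
          ((1 - y / x) ^ β / (x ^ (-α) + (1 - y / x) ^ α) - 1) * (y ^ β / (1 + y ^ α))) := by
    filter_upwards [eventually_gt_atTop 0] with x hx
    rw [← mul_assoc, ← rpow_add hx, show α - β + 1 + (β - α) = 1 by ring, rpow_one,
      ← intervalIntegral.integral_const_mul]
    simp only [gainDeviation, mul_assoc]
  have hbound : ∀ᶠ x in atTop, ∀ y ∈ Ioc 0 (x / 2),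
      ‖x * gainDeviation α β x y * (y ^ β / (1 + y ^ α))‖ ≤
        2 ^ α * α * (y ^ (β + 1) / (1 + y ^ α)) + 2 ^ α * (y ^ β / (1 + y ^ α)) := by
    filter_upwards [eventually_ge_atTop 1] with x hx y ⟨hy0, hy⟩
    have hw0 : 0 ≤ y ^ β / (1 + y ^ α) := by positivity
    calc ‖x * gainDeviation α β x y * (y ^ β / (1 + y ^ α))‖
        = x * |gainDeviation α β x y| * (y ^ β / (1 + y ^ α)) := by
          rw [norm_mul, norm_mul, norm_of_nonneg hw0, norm_of_nonneg (by linarith),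
            Real.norm_eq_abs]
      _ ≤ 2 ^ α * (α * y + 1) * (y ^ β / (1 + y ^ α)) := by
          gcongr ?_ * _
          exact mul_abs_gainDeviation_le hβ (by linarith) (by linarith) hx hy0.le hy
      _ = _ := by rw [← hw y hy0]; ring
  have hlim : ∀ y ∈ Ioi (0:ℝ),
      Tendsto (fun x => x * gainDeviation α β x y * (y ^ β / (1 + y ^ α))) atTop
        (𝓝 ((α - β) * (y ^ (β + 1) / (1 + y ^ α)))) := fun y hy => by
    simpa only [mul_assoc, hw y hy] using
      (tendsto_mul_gainDeviation β (by linarith) hy).mul_const (y ^ β / (1 + y ^ α))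
  have hconv := tendsto_intervalIntegral_Ioi_of_dominated (tendsto_id.atTop_div_const two_pos)
    (Eventually.of_forall fun x => by unfold gainDeviation; fun_prop) hbound
    (((integrableOn_rpow_div_one_add_rpow (by linarith) (by linarith)).const_mul _).add
      ((integrableOn_rpow_div_one_add_rpow hβ (by linarith)).const_mul _)) hlim
  rw [integral_const_mul] at hconv
  exact hconv.congr' hrewrite
end

section
/- Let v ∈ C¹([0,∞)) with v(x)=(x₀−x)w(x), w ∈ C¹, w>0 on [0,∞), x₀>0, and let M > 0. Define G(x,y) := exp(−M ∫_y^x z/v(z) dz) for x,y on the same side of x₀ (both in [0,x₀) or both in (x₀,∞)). Then there exists a strictly positive continuous function G₀ on (ℝ⁺)² such that G(x,y) = G₀(x,y)·|x−x₀|^c / |y−x₀|^c with c = M·x₀/w(x₀). -/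
open MeasureTheory Real Set
open scoped Interval

/-!
Near the zero `x₀` of `v z = (x₀ - z) w z` the integrand splits as
`z / v z = (x₀ / w x₀) (x₀ - z)⁻¹ + r z` with `r` continuous up to `x₀`: the numerator of
`r` is the slope of `z ↦ z w x₀ - x₀ w z`, which vanishes at `x₀` and is differentiable
there. Integrating, the pole contributes `(x₀ / w x₀) (log |y - x₀| - log |x - x₀|)`, which
exponentiates to the power-law factor, and `G₀ x y = exp (-M ∫_y^x r)` is what is left.
-/

section Remainder

variable {𝕜 : Type*} [NontriviallyNormedField 𝕜]

noncomputable def poleRemainder (w : 𝕜 → 𝕜) (x₀ z : 𝕜) : 𝕜 :=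
  -dslope (fun z => z * w x₀ - x₀ * w z) x₀ z / (w z * w x₀)

theorem div_eq_pole_add_poleRemainder {w : 𝕜 → 𝕜} {x₀ z : 𝕜} (hz : z ≠ x₀)
    (hwz : w z ≠ 0) (hw₀ : w x₀ ≠ 0) :
    z / ((x₀ - z) * w z) = x₀ / w x₀ * (x₀ - z)⁻¹ + poleRemainder w x₀ z := by
  have hz' : x₀ - z ≠ 0 := sub_ne_zero.mpr hz.symm
  have hz'' : z - x₀ ≠ 0 := sub_ne_zero.mpr hz
  rw [poleRemainder, dslope_of_ne _ hz, slope_def_field]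
  field_simp
  ring

theorem continuousOn_poleRemainder {w : 𝕜 → 𝕜} {x₀ : 𝕜} {s : Set 𝕜} (hs : s ∈ nhds x₀)
    (hw : ContinuousOn w s) (hwd : DifferentiableAt 𝕜 w x₀) (hw₀ : ∀ z ∈ s, w z ≠ 0) :
    ContinuousOn (poleRemainder w x₀) s := by
  have hslope : ContinuousOn (dslope (fun z => z * w x₀ - x₀ * w z) x₀) s :=
    (continuousOn_dslope hs).mpr
      ⟨(continuousOn_id.mul continuousOn_const).sub (continuousOn_const.mul hw),
        (differentiableAt_id.mul_const _).sub (hwd.const_mul _)⟩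
  exact hslope.neg.div (hw.mul continuousOn_const)
    fun z hz => mul_ne_zero (hw₀ z hz) (hw₀ x₀ (mem_of_mem_nhds hs))

end Remainder

theorem integral_inv_sub_left {x₀ x y : ℝ} (h : x₀ ∉ [[y, x]]) :
    ∫ z in y..x, (x₀ - z)⁻¹ = log |y - x₀| - log |x - x₀| := by
  have hy : x₀ - y ≠ 0 := sub_ne_zero.mpr fun e => h (e ▸ left_mem_uIcc)
  have hx : x₀ - x ≠ 0 := sub_ne_zero.mpr fun e => h (e ▸ right_mem_uIcc)
  have h0 : (0 : ℝ) ∉ [[x₀ - x, x₀ - y]] := by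
    intro hmem
    apply h
    rw [mem_uIcc] at hmem ⊢
    rcases hmem with ⟨h1, h2⟩ | ⟨h1, h2⟩
    exacts [Or.inl ⟨by linarith, by linarith⟩, Or.inr ⟨by linarith, by linarith⟩]
  rw [intervalIntegral.integral_comp_sub_left (fun u => u⁻¹) x₀, integral_inv h0,
    log_div hy hx, ← log_abs, ← log_abs (x₀ - x), abs_sub_comm, abs_sub_comm x₀]

theorem stmt_11_general (x₀ M : ℝ) (hx₀ : 0 < x₀)
    (w v : ℝ → ℝ) (hw : ContDiffOn ℝ 1 w (Ici 0))
    (hwpos : ∀ x ∈ Ici (0:ℝ), 0 < w x)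
    (hv : ∀ x, v x = (x₀ - x) * w x) :
    ∃ G₀ : ℝ → ℝ → ℝ,
      ContinuousOn (fun p : ℝ × ℝ => G₀ p.1 p.2) (Ici 0 ×ˢ Ici 0) ∧
      (∀ x ∈ Ici (0:ℝ), ∀ y ∈ Ici (0:ℝ), 0 < G₀ x y) ∧
      ∀ x y : ℝ, 0 ≤ x → 0 ≤ y →
        ((x < x₀ ∧ y < x₀) ∨ (x₀ < x ∧ x₀ < y)) →
        Real.exp (-M * ∫ z in y..x, z / v z)
          = G₀ x y * |x - x₀| ^ (M * x₀ / w x₀) / |y - x₀| ^ (M * x₀ / w x₀) := by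
  have hw₀ : w x₀ ≠ 0 := (hwpos x₀ hx₀.le).ne'
  have hrem : ContinuousOn (poleRemainder w x₀) (Ici 0) :=
    continuousOn_poleRemainder (Ici_mem_nhds hx₀) hw.continuousOn
      ((hw.differentiableOn one_ne_zero).differentiableAt (Ici_mem_nhds hx₀))
      fun z hz => (hwpos z hz).ne'
  set r : ℝ → ℝ := fun z => poleRemainder w x₀ (max z 0)
  have hr : Continuous r :=
    hrem.comp_continuous (continuous_id.max continuous_const) fun z => le_max_right z 0
  set F : ℝ → ℝ := fun t => ∫ s in (0:ℝ)..t, r s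
  have hF : Continuous F :=
    intervalIntegral.continuous_primitive (fun a b => hr.intervalIntegrable a b) 0
  refine ⟨fun x y => exp (-M * (F x - F y)), by fun_prop, fun _ _ _ _ => exp_pos _, ?_⟩
  intro x y hx hy hside
  have hpole : x₀ ∉ [[y, x]] := by
    rcases hside with ⟨h₁, h₂⟩ | ⟨h₁, h₂⟩
    exacts [notMem_uIcc_of_gt h₂ h₁, notMem_uIcc_of_lt h₂ h₁]
  have hpole_int : IntervalIntegrable (fun z => x₀ / w x₀ * (x₀ - z)⁻¹) volume y x :=
    (continuousOn_const.mul ((continuousOn_const.sub continuousOn_id).inv₀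
      fun z hz => sub_ne_zero.mpr fun e : x₀ = z => hpole (e ▸ hz))).intervalIntegrable
  have hsplit : ∫ z in y..x, z / v z = x₀ / w x₀ * (∫ z in y..x, (x₀ - z)⁻¹) + (F x - F y) := by
    rw [intervalIntegral.integral_interval_sub_left (hr.intervalIntegrable 0 x)
      (hr.intervalIntegrable 0 y), ← intervalIntegral.integral_const_mul,
      ← intervalIntegral.integral_add hpole_int (hr.intervalIntegrable y x)]
    refine intervalIntegral.integral_congr fun z hz => ?_
    have hz₀ : 0 ≤ z := (le_min hy hx).trans hz.1
    simp only [hv, r, max_eq_left hz₀]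
    exact div_eq_pole_add_poleRemainder (fun e => hpole (e ▸ hz)) (hwpos z hz₀).ne' hw₀
  have habs : ∀ t, t ≠ x₀ → 0 < |t - x₀| := fun t ht => abs_pos.mpr (sub_ne_zero.mpr ht)
  rw [hsplit, integral_inv_sub_left hpole,
    rpow_def_of_pos (habs x fun e => hpole (e ▸ right_mem_uIcc)),
    rpow_def_of_pos (habs y fun e => hpole (e ▸ left_mem_uIcc)), ← exp_add, ← exp_sub]
  ring_nf

/-- Singularity structure of the Green's kernel G(x,y) = exp(-M ∫_y^x z/v(z) dz) for
v(x) = (x₀-x) w(x), w ∈ C¹ positive: there is a strictly positive continuous G₀ with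
G(x,y) = G₀(x,y) |x-x₀|^c / |y-x₀|^c, c = M x₀ / w(x₀), whenever x, y ≥ 0 lie on the
same side of x₀. -/
theorem stmt_11 (x₀ M : ℝ) (hx₀ : 0 < x₀) (hM : 0 < M)
    (w v : ℝ → ℝ) (hw : ContDiffOn ℝ 1 w (Ici 0))
    (hwpos : ∀ x ∈ Ici (0:ℝ), 0 < w x)
    (hv : ∀ x, v x = (x₀ - x) * w x) :
    ∃ G₀ : ℝ → ℝ → ℝ,
      ContinuousOn (fun p : ℝ × ℝ => G₀ p.1 p.2) (Ici 0 ×ˢ Ici 0) ∧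
      (∀ x ∈ Ici (0:ℝ), ∀ y ∈ Ici (0:ℝ), 0 < G₀ x y) ∧
      ∀ x y : ℝ, 0 ≤ x → 0 ≤ y →
        ((x < x₀ ∧ y < x₀) ∨ (x₀ < x ∧ x₀ < y)) →
        Real.exp (-M * ∫ z in y..x, z / v z)
          = G₀ x y * |x - x₀| ^ (M * x₀ / w x₀) / |y - x₀| ^ (M * x₀ / w x₀) :=
  stmt_11_general x₀ M hx₀ w v hw hwpos hv
end

section
/- Let β > 2, δ := β/2 − 1, A > 0, x̄ > x₀ > 0, J > 0, M₁ > 0, m := min_{[0,x₀/2]} w > 0. Suppose f ≥ 0 satisfies f(x) ≤ J/((x₀−x)w(x)) on [0,x₀/2], ∫₀^∞ x f dx ≤ M₁, and f(x) ≤ J/(A x^β) for x ≥ x̄. Then ∫₀^∞ x^{1+δ} f(x) dx ≤ J(x₀/2)^{β/2}/m + x̄^{β/2−1} M₁ + J·x̄^{1−β/2}/(A(β/2−1)), in particular this (1+δ)-moment is finite and bounded independently of any regularization parameter. -/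
open MeasureTheory Real Set

/-!
Split `(0, ∞)` at `x₀/2` and `x̄`. Near the origin `f` is bounded (the singular weight
`1/(x₀ - x)` stays below `2/x₀`), so that piece is controlled by the length of the interval.
On `(x₀/2, x̄]` the extra factor `x^δ` is at most `x̄^δ`, so the first moment controls it.
Beyond `x̄` the decay `f ≤ J/(A x^β)` makes `x^{β/2} f` integrable since `β/2 > 1`.
-/

theorem div_sub_mul_le_div_half_mul {J m w x₀ x : ℝ} (hJ : 0 ≤ J) (hx₀ : 0 < x₀)
    (hm : 0 < m) (hx : x ≤ x₀ / 2) (hw : m ≤ w) :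
    J / ((x₀ - x) * w) ≤ J / (x₀ / 2 * m) :=
  div_le_div_of_nonneg_left hJ (by positivity) <|
    mul_le_mul (by linarith) hw hm.le (by linarith)

theorem setLIntegral_Ioi_eq_Ioc_add_Ioc_add_Ioi {μ : Measure ℝ} {g : ℝ → ENNReal}
    {a b c : ℝ} (hab : a ≤ b) (hbc : b ≤ c) :
    ∫⁻ x in Ioi a, g x ∂μ
      = ∫⁻ x in Ioc a b, g x ∂μ + ∫⁻ x in Ioc b c, g x ∂μ
        + ∫⁻ x in Ioi c, g x ∂μ := by
  rw [← Ioc_union_Ioi_eq_Ioi hab, lintegral_union measurableSet_Ioi (Ioc_disjoint_Ioi le_rfl),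
    ← Ioc_union_Ioi_eq_Ioi hbc, lintegral_union measurableSet_Ioi (Ioc_disjoint_Ioi le_rfl),
    add_assoc]

theorem lintegral_Ioi_rpow_of_lt {s c : ℝ} (hs : s < -1) (hc : 0 < c) :
    ∫⁻ x in Ioi c, ENNReal.ofReal (x ^ s) = ENNReal.ofReal (c ^ (s + 1) / -(s + 1)) := by
  have hpos : ∀ᵐ x ∂volume.restrict (Ioi c), 0 ≤ x ^ s :=
    (ae_restrict_iff' measurableSet_Ioi).2 <| ae_of_all _ fun x hx ↦
      (rpow_pos_of_pos (hc.trans hx) s).le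
  rw [← ofReal_integral_eq_lintegral_ofReal (integrableOn_Ioi_rpow_of_lt hs hc) hpos,
    integral_Ioi_rpow_of_lt hs hc, neg_div, div_neg]

theorem setLIntegral_Ioc_zero_rpow_mul_le {f : ℝ → ℝ} {c p B : ℝ} (hc : 0 ≤ c)
    (hp : 0 ≤ p) (hB : 0 ≤ B) (hf : ∀ x ∈ Ioc 0 c, f x ≤ B) :
    ∫⁻ x in Ioc 0 c, ENNReal.ofReal (x ^ p * f x) ≤ ENNReal.ofReal (c ^ p * B * c) := by
  calc ∫⁻ x in Ioc 0 c, ENNReal.ofReal (x ^ p * f x)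
      ≤ ∫⁻ _ in Ioc 0 c, ENNReal.ofReal (c ^ p * B) :=
        setLIntegral_mono' measurableSet_Ioc fun x hx ↦ ENNReal.ofReal_le_ofReal <|
          calc x ^ p * f x ≤ x ^ p * B :=
                mul_le_mul_of_nonneg_left (hf x hx) (rpow_nonneg hx.1.le p)
            _ ≤ c ^ p * B := by gcongr; exacts [hx.1.le, hx.2]
    _ = ENNReal.ofReal (c ^ p * B * c) := by
        rw [setLIntegral_const, Real.volume_Ioc, sub_zero, ← ENNReal.ofReal_mul (by positivity)]

theorem setLIntegral_Ioc_rpow_mul_le_mul_moment {f : ℝ → ℝ} {a b p : ℝ} (ha : 0 ≤ a)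
    (hp : 1 ≤ p) :
    ∫⁻ x in Ioc a b, ENNReal.ofReal (x ^ p * f x)
      ≤ ENNReal.ofReal (b ^ (p - 1)) * ∫⁻ x in Ioi 0, ENNReal.ofReal (x * f x) := by
  rw [← lintegral_const_mul' _ _ ENNReal.ofReal_ne_top]
  calc ∫⁻ x in Ioc a b, ENNReal.ofReal (x ^ p * f x)
      ≤ ∫⁻ x in Ioc a b, ENNReal.ofReal (b ^ (p - 1)) * ENNReal.ofReal (x * f x) := by
        refine setLIntegral_mono' measurableSet_Ioc fun x hx ↦ ?_
        have hx₀ : 0 < x := ha.trans_lt hx.1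
        rw [show x ^ p * f x = x ^ (p - 1) * (x * f x) by
            rw [← mul_assoc, ← rpow_add_one hx₀.ne', sub_add_cancel],
          ENNReal.ofReal_mul (rpow_nonneg hx₀.le _)]
        gcongr
        exact hx.2
    _ ≤ _ := lintegral_mono_set fun x hx ↦ ha.trans_lt hx.1

theorem setLIntegral_Ioi_rpow_mul_le_of_le_div_rpow {f : ℝ → ℝ} {b p β C : ℝ} (hb : 0 < b)
    (hC : 0 ≤ C) (hpβ : p + 1 < β) (hf : ∀ x, b ≤ x → f x ≤ C / x ^ β) :
    ∫⁻ x in Ioi b, ENNReal.ofReal (x ^ p * f x)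
      ≤ ENNReal.ofReal (C * b ^ (p + 1 - β) / (β - p - 1)) := by
  calc ∫⁻ x in Ioi b, ENNReal.ofReal (x ^ p * f x)
      ≤ ∫⁻ x in Ioi b, ENNReal.ofReal C * ENNReal.ofReal (x ^ (p - β)) := by
        refine setLIntegral_mono' measurableSet_Ioi fun x hx ↦ ?_
        rw [← ENNReal.ofReal_mul hC, rpow_sub (hb.trans hx)]
        refine ENNReal.ofReal_le_ofReal ?_
        calc x ^ p * f x ≤ x ^ p * (C / x ^ β) :=
              mul_le_mul_of_nonneg_left (hf x hx.le) (rpow_nonneg (hb.trans hx).le p)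
          _ = C * (x ^ p / x ^ β) := by ring
    _ = ENNReal.ofReal (C * b ^ (p + 1 - β) / (β - p - 1)) := by
        rw [lintegral_const_mul' _ _ ENNReal.ofReal_ne_top,
          lintegral_Ioi_rpow_of_lt (by linarith) hb, ← ENNReal.ofReal_mul hC,
          show p - β + 1 = p + 1 - β by ring, show -(p + 1 - β) = β - p - 1 by ring,
          mul_div_assoc]

theorem stmt_15_general (x₀ J M₁ m A β δ xbar : ℝ) (hx₀ : 0 < x₀) (hJ : 0 < J)
    (hM₁ : 0 < M₁) (hm : 0 < m) (hA : 0 < A) (hβ : 2 < β) (hδ : δ = β / 2 - 1)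
    (hxbar : x₀ < xbar) (w f : ℝ → ℝ)
    (hmmin : ∀ x ∈ Icc (0:ℝ) (x₀ / 2), m ≤ w x)
    (hb1 : ∀ x ∈ Icc (0:ℝ) (x₀ / 2), f x ≤ J / ((x₀ - x) * w x))
    (hb2 : ∀ x : ℝ, xbar ≤ x → f x ≤ J / (A * x ^ β))
    (hM : ∫⁻ x in Ioi (0:ℝ), ENNReal.ofReal (x * f x) ≤ ENNReal.ofReal M₁) :
    ∫⁻ x in Ioi (0:ℝ), ENNReal.ofReal (x ^ (1 + δ) * f x)
      ≤ ENNReal.ofReal (J * (x₀ / 2) ^ (β / 2) / m + xbar ^ (β / 2 - 1) * M₁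
          + J * xbar ^ (1 - β / 2) / (A * (β / 2 - 1))) := by
  have hp : 1 + δ = β / 2 := by rw [hδ]; ring
  have hxbar₀ : 0 < xbar := hx₀.trans hxbar
  have hβ₂ : 0 < β / 2 - 1 := by linarith
  have hnear : ∫⁻ x in Ioc 0 (x₀ / 2), ENNReal.ofReal (x ^ (β / 2) * f x)
      ≤ ENNReal.ofReal (J * (x₀ / 2) ^ (β / 2) / m) := by
    refine (setLIntegral_Ioc_zero_rpow_mul_le (B := J / (x₀ / 2 * m)) (by positivity)
      (by positivity) (by positivity) fun x hx ↦ ?_).trans_eq (by congr 1; field_simp)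
    have hxI : x ∈ Icc 0 (x₀ / 2) := Ioc_subset_Icc_self hx
    exact (hb1 x hxI).trans (div_sub_mul_le_div_half_mul hJ.le hx₀ hm hx.2 (hmmin x hxI))
  have hmid : ∫⁻ x in Ioc (x₀ / 2) xbar, ENNReal.ofReal (x ^ (β / 2) * f x)
      ≤ ENNReal.ofReal (xbar ^ (β / 2 - 1) * M₁) :=
    calc _ ≤ ENNReal.ofReal (xbar ^ (β / 2 - 1)) * ∫⁻ x in Ioi 0, ENNReal.ofReal (x * f x) :=
          setLIntegral_Ioc_rpow_mul_le_mul_moment (by positivity) (by linarith)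
      _ ≤ ENNReal.ofReal (xbar ^ (β / 2 - 1)) * ENNReal.ofReal M₁ := by gcongr
      _ = _ := (ENNReal.ofReal_mul (by positivity)).symm
  have htail : ∫⁻ x in Ioi xbar, ENNReal.ofReal (x ^ (β / 2) * f x)
      ≤ ENNReal.ofReal (J * xbar ^ (1 - β / 2) / (A * (β / 2 - 1))) := by
    refine (setLIntegral_Ioi_rpow_mul_le_of_le_div_rpow hxbar₀ (by positivity) (by linarith)
      fun x hx ↦ (hb2 x hx).trans_eq (div_div _ _ _).symm).trans_eq ?_
    rw [show β / 2 + 1 - β = 1 - β / 2 by ring, show β - β / 2 - 1 = β / 2 - 1 by ring,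
      div_mul_eq_mul_div, div_div]
  rw [hp, setLIntegral_Ioi_eq_Ioc_add_Ioc_add_Ioi (by positivity) (by linarith : x₀ / 2 ≤ xbar)]
  refine (add_le_add (add_le_add hnear hmid) htail).trans_eq ?_
  rw [← ENNReal.ofReal_add (by positivity) (by positivity),
    ← ENNReal.ofReal_add (by positivity) (by positivity)]

/-- Uniform higher-moment bound: for β > 2, δ = β/2 - 1, if f ≥ 0 is bounded by
J/((x₀-x)w(x)) on [0,x₀/2] (with w ≥ m > 0 there), by J/(A x^β) for x ≥ x̄ > x₀,
and has first moment at most M₁, then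
∫₀^∞ x^{1+δ} f dx ≤ J(x₀/2)^{β/2}/m + x̄^{β/2-1} M₁ + J x̄^{1-β/2}/(A(β/2-1)). -/
theorem stmt_15 (x₀ J M₁ m A β δ xbar : ℝ) (hx₀ : 0 < x₀) (hJ : 0 < J)
    (hM₁ : 0 < M₁) (hm : 0 < m) (hA : 0 < A) (hβ : 2 < β) (hδ : δ = β / 2 - 1)
    (hxbar : x₀ < xbar) (w f : ℝ → ℝ)
    (hmmin : ∀ x ∈ Icc (0:ℝ) (x₀ / 2), m ≤ w x)
    (hmeas : Measurable f) (hfpos : ∀ x, 0 ≤ f x)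
    (hb1 : ∀ x ∈ Icc (0:ℝ) (x₀ / 2), f x ≤ J / ((x₀ - x) * w x))
    (hb2 : ∀ x : ℝ, xbar ≤ x → f x ≤ J / (A * x ^ β))
    (hM : ∫⁻ x in Ioi (0:ℝ), ENNReal.ofReal (x * f x) ≤ ENNReal.ofReal M₁) :
    ∫⁻ x in Ioi (0:ℝ), ENNReal.ofReal (x ^ (1 + δ) * f x)
      ≤ ENNReal.ofReal (J * (x₀ / 2) ^ (β / 2) / m + xbar ^ (β / 2 - 1) * M₁
          + J * xbar ^ (1 - β / 2) / (A * (β / 2 - 1))) :=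
  stmt_15_general x₀ J M₁ m A β δ xbar hx₀ hJ hM₁ hm hA hβ hδ hxbar w f hmmin hb1 hb2 hM
end

section
/- Let K : Fin (J+1) → Fin (J+1) → ℝ be symmetric (K_{i,j} = K_{j,i}) and let f : Fin (J+1) → ℝ, Δx > 0, x_j := j·Δx. Define Q_j := (Δx/2)·Σ_{i=0}^{j} K_{j−i,i} f_{j−i} f_i − Δx·Σ_{i=0}^{J−j} K_{j,i} f_j f_i. Then Σ_{j=0}^{J} x_j Q_j = 0. -/
/-! Both terms of the first moment are sums over the triangle `{(a, b) | a + b ≤ J}`: substituting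
`(a, b) = (j - i, i)` turns the gain term into `(Δx² / 2) Σ (a + b) K a b f a f b`, and swapping `a ↔ b`
with the symmetry of `K` turns the loss term `Δx² Σ a K a b f a f b` into the same sum. -/

open Finset

section Triangle

variable {M : Type*} [AddCommMonoid M]

theorem sum_range_sum_range_sub_eq_sum_triangle (J : ℕ) (g : ℕ → ℕ → M) :
    ∑ j ∈ range (J + 1), ∑ i ∈ range (j + 1), g (j - i) i
      = ∑ j ∈ range (J + 1), ∑ i ∈ range (J - j + 1), g j i := by
  rw [sum_sigma', sum_sigma']
  apply sum_nbij' (fun p => ⟨p.1 - p.2, p.2⟩) (fun p => ⟨p.1 + p.2, p.2⟩) <;>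
    rintro ⟨j, i⟩ <;> simp <;> omega

theorem sum_triangle_comm (J : ℕ) (g : ℕ → ℕ → M) :
    ∑ j ∈ range (J + 1), ∑ i ∈ range (J - j + 1), g j i
      = ∑ j ∈ range (J + 1), ∑ i ∈ range (J - j + 1), g i j := by
  rw [sum_sigma', sum_sigma']
  apply sum_nbij' (fun p => ⟨p.2, p.1⟩) (fun p => ⟨p.2, p.1⟩) <;>
    rintro ⟨j, i⟩ <;> simp <;> omega

end Triangle

section Moment

variable {R : Type*} [CommSemiring R]

theorem sum_range_mul_sum_range_sub_eq_sum_triangle (J : ℕ) (g : ℕ → ℕ → R) :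
    ∑ j ∈ range (J + 1), (j : R) * ∑ i ∈ range (j + 1), g (j - i) i
      = ∑ j ∈ range (J + 1), ∑ i ∈ range (J - j + 1), ((j : R) + i) * g j i := by
  rw [← sum_range_sum_range_sub_eq_sum_triangle J fun a b => ((a : R) + b) * g a b]
  refine sum_congr rfl fun j _ => ?_
  rw [mul_sum]
  refine sum_congr rfl fun i hi => ?_
  rw [← Nat.cast_add, Nat.sub_add_cancel (Nat.lt_succ_iff.mp (mem_range.mp hi))]

theorem two_mul_sum_triangle_of_symm (J : ℕ) (g : ℕ → ℕ → R) (hg : ∀ i j, g i j = g j i) :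
    2 * ∑ j ∈ range (J + 1), ∑ i ∈ range (J - j + 1), (j : R) * g j i
      = ∑ j ∈ range (J + 1), ∑ i ∈ range (J - j + 1), ((j : R) + i) * g j i := by
  have hswap : ∑ j ∈ range (J + 1), ∑ i ∈ range (J - j + 1), (j : R) * g j i
      = ∑ j ∈ range (J + 1), ∑ i ∈ range (J - j + 1), (i : R) * g j i := by
    rw [sum_triangle_comm J fun a b => (a : R) * g a b]
    simp only [hg]
  rw [two_mul]
  nth_rewrite 2 [hswap]
  simp only [← sum_add_distrib, add_mul]

end Moment

theorem stmt_16_general (J : ℕ) (Δx : ℝ) (K : ℕ → ℕ → ℝ) (f : ℕ → ℝ)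
    (hsym : ∀ i j, K i j = K j i) :
    ∑ j ∈ Finset.range (J + 1), ((j : ℝ) * Δx) *
      ((Δx / 2) * (∑ i ∈ Finset.range (j + 1), K (j - i) i * f (j - i) * f i)
        - Δx * (∑ i ∈ Finset.range (J - j + 1), K j i * f j * f i)) = 0 := by
  set F : ℕ → ℕ → ℝ := fun a b => K a b * f a * f b
  have hF : ∀ i j, F i j = F j i := fun i j => by simp only [F, hsym i j]; ring
  have gain := sum_range_mul_sum_range_sub_eq_sum_triangle J F
  have loss := two_mul_sum_triangle_of_symm J F hF
  simp only [F, ← mul_sum] at gain loss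
  calc _ = (Δx * Δx / 2) * ∑ j ∈ range (J + 1), (j : ℝ) *
          ∑ i ∈ range (j + 1), K (j - i) i * f (j - i) * f i
        - (Δx * Δx / 2) * (2 * ∑ j ∈ range (J + 1), (j : ℝ) *
          ∑ i ∈ range (J - j + 1), K j i * f j * f i) := by
        simp only [mul_sum (range (J + 1)), ← sum_sub_distrib]
        refine sum_congr rfl fun j _ => ?_
        ring
    _ = 0 := by rw [gain, loss, sub_self]

/-- The discretized Smoluchowski coagulation operator
Q_j = (Δx/2) Σ_{i=0}^{j} K_{j-i,i} f_{j-i} f_i - Δx Σ_{i=0}^{J-j} K_{j,i} f_j f_i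
conserves the discrete first moment: Σ_{j=0}^{J} x_j Q_j = 0, x_j = jΔx,
for any symmetric kernel K. -/
theorem stmt_16 (J : ℕ) (Δx : ℝ) (hΔx : 0 < Δx) (K : ℕ → ℕ → ℝ) (f : ℕ → ℝ)
    (hsym : ∀ i j, K i j = K j i) :
    ∑ j ∈ Finset.range (J + 1), ((j : ℝ) * Δx) *
      ((Δx / 2) * (∑ i ∈ Finset.range (j + 1), K (j - i) i * f (j - i) * f i)
        - Δx * (∑ i ∈ Finset.range (J - j + 1), K j i * f j * f i)) = 0 :=
  stmt_16_general J Δx K f hsym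
end
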